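/- arXiv:1407.3878 — 5 statements merged into one kernel-verified Lean document; each statement's English description precedes it below -/
import Mathlib

section
/- Let A be a unital C*-algebra and let T : A → A be a (not necessarily linear or continuous) 2-local triple derivation with T(1) = 0. Then T(x)* = T(x) for every self-adjoint element x ∈ A. -/
noncomputable section

/-- The C*-triple product `{a,b,c} = (a b* c + c b* a)/2`. -/
def triple {A : Type*} [NonUnitalRing A] [StarRing A] [Module ℂ A] (a b c : A) : A :=
  (2 : ℂ)⁻¹ • (a * star b * c + c * star b * a)

/-- A (complex-linear) triple derivation on `A`:
`δ{a,b,c} = {δ(a),b,c} + {a,δ(b),c} + {a,b,δ(c)}`. -/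
def IsTripleDerivation {A : Type*} [NonUnitalRing A] [StarRing A] [Module ℂ A]
    (δ : A →ₗ[ℂ] A) : Prop :=
  ∀ a b c : A, δ (triple a b c) = triple (δ a) b c + triple a (δ b) c + triple a b (δ c)

/-- A 2-local triple derivation on `A`: a map (not assumed linear or continuous) that agrees
with some triple derivation at each pair of points. -/
def Is2LocalTripleDerivation {A : Type*} [NonUnitalRing A] [StarRing A] [Module ℂ A]
    (T : A → A) : Prop :=
  ∀ a b : A, ∃ S : A →ₗ[ℂ] A, IsTripleDerivation S ∧ T a = S a ∧ T b = S b

variable {A : Type*} [NormedRing A] [StarRing A] [CStarRing A] [NormedAlgebra ℂ A]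
  [StarModule ℂ A] [CompleteSpace A]

section TripleProduct

@[simp]
lemma triple_zero_left {R : Type*} [NonUnitalRing R] [StarRing R] [Module ℂ R] (b c : R) :
    triple 0 b c = 0 := by
  simp [triple]

@[simp]
lemma triple_zero_right {R : Type*} [NonUnitalRing R] [StarRing R] [Module ℂ R] (a b : R) :
    triple a b 0 = 0 := by
  simp [triple]

variable {R : Type*} [Ring R] [StarRing R] [Module ℂ R]

@[simp]
lemma triple_one_one (b : R) : triple 1 b 1 = star b := by
  rw [triple, ← two_smul ℂ]
  simp only [one_mul, mul_one, smul_smul, inv_mul_cancel₀ (two_ne_zero (α := ℂ)), one_smul]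

lemma IsTripleDerivation.map_star {δ : R →ₗ[ℂ] R} (hδ : IsTripleDerivation δ) (hδ1 : δ 1 = 0)
    (b : R) : δ (star b) = star (δ b) := by
  simpa [hδ1] using hδ 1 b 1

end TripleProduct

/-- If `T` is a 2-local triple derivation on a unital C*-algebra `A` with
`T(1) = 0`, then `T(x)* = T(x)` for every self-adjoint `x ∈ A`. -/
theorem twoLocalTripleDerivation_map_selfAdjoint (T : A → A)
    (hT : Is2LocalTripleDerivation T) (hT1 : T 1 = 0) :
    ∀ x : A, IsSelfAdjoint x → star (T x) = T x := by
  intro x hx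
  obtain ⟨S, hS, hS1, hSx⟩ := hT 1 x
  rw [hSx, ← hS.map_star (hT1 ▸ hS1.symm), hx.star_eq]
end
end

section
/- Let M be a von Neumann algebra acting on a complex Hilbert space H, let u ∈ M be a positive element with trivial kernel (so u has full support), and let c ∈ M be self-adjoint. If the spectrum of c²u contains no strictly positive real number, then c = 0. -/
/-!
For self-adjoint `c`, the operator `c u c` is positive and has the same nonzero spectrum as
`c (c u) = c² u`, so its spectrum is `{0}` and hence `c u c = 0`. Writing `c u c` as
`(√u c)* (√u c)`, the C*-identity gives `√u c = 0`, so `u c = 0`, and injectivity of `u`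
forces `c = 0`.
-/

noncomputable section

/-- Scalar multiplication by complex numbers preserves membership in a von Neumann algebra. -/
instance VonNeumannAlgebra.instSMulMemClass {H : Type*} [NormedAddCommGroup H]
    [InnerProductSpace ℂ H] [CompleteSpace H] :
    SMulMemClass (VonNeumannAlgebra H) ℂ (H →L[ℂ] H) where
  smul_mem {s} c x hx := s.toStarSubalgebra.smul_mem hx c

variable {H : Type*} [NormedAddCommGroup H] [InnerProductSpace ℂ H] [CompleteSpace H]

theorem spectrum.nonzero_mul_mul_eq_sq_mul {𝕜 A : Type*} [Field 𝕜] [Ring A] [Algebra 𝕜 A]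
    (a b : A) : spectrum 𝕜 (b * a * b) \ {0} = spectrum 𝕜 (b ^ 2 * a) \ {0} := by
  rw [spectrum.nonzero_mul_comm, sq, mul_assoc]

section CStarAlgebra

variable {A : Type*} [CStarAlgebra A] [PartialOrder A] [StarOrderedRing A]

theorem eq_zero_of_nonneg_of_forall_pos_notMem_spectrum {a : A} (ha : 0 ≤ a)
    (h : ∀ r : ℝ, 0 < r → (r : ℂ) ∉ spectrum ℂ a) : a = 0 := by
  refine CFC.eq_zero_of_spectrum_subset_zero (R := ℝ) a fun r hr ↦ ?_
  have hr_nonneg : 0 ≤ r := spectrum_nonneg_of_nonneg ha hr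
  by_contra hr_ne
  exact h r (hr_nonneg.lt_of_ne' hr_ne) (spectrum.algebraMap_mem ℂ hr)

theorem mul_eq_zero_of_star_mul_mul_eq_zero {u : A} (hu : 0 ≤ u) {c : A}
    (h : star c * u * c = 0) : u * c = 0 := by
  have hsc : CFC.sqrt u * c = 0 := by
    refine (CStarRing.star_mul_self_eq_zero_iff _).mp ?_
    rw [star_mul, (CFC.sqrt_nonneg u).isSelfAdjoint.star_eq, mul_assoc, ← mul_assoc (CFC.sqrt u),
      CFC.sqrt_mul_sqrt_self u, ← mul_assoc, h]
  rw [← CFC.sqrt_mul_sqrt_self u, mul_assoc, hsc, mul_zero]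

end CStarAlgebra

theorem eq_zero_of_spectrum_sq_mul_nonpos_general
    (u c : H →L[ℂ] H)
    (hu_pos : u.IsPositive) (hu_ker : LinearMap.ker (u : H →ₗ[ℂ] H) = ⊥)
    (hc : IsSelfAdjoint c)
    (hspec : ∀ r : ℝ, 0 < r → (r : ℂ) ∉ spectrum ℂ (c ^ 2 * u)) :
    c = 0 := by
  have hu : 0 ≤ u := u.nonneg_iff_isPositive.mpr hu_pos
  have hcuc : c * u * c = 0 := by
    refine eq_zero_of_nonneg_of_forall_pos_notMem_spectrum (hc.conjugate_nonneg hu)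
      fun r hr hmem ↦ ?_
    have hr0 : (r : ℂ) ≠ 0 := by exact_mod_cast hr.ne'
    have hmem' : (r : ℂ) ∈ spectrum ℂ (c * u * c) \ {0} := ⟨hmem, hr0⟩
    rw [spectrum.nonzero_mul_mul_eq_sq_mul] at hmem'
    exact hspec r hr hmem'.1
  have huc : u * c = 0 := mul_eq_zero_of_star_mul_mul_eq_zero hu (by rwa [hc.star_eq])
  ext x
  have hcx : c x ∈ LinearMap.ker (u : H →ₗ[ℂ] H) := by simpa using congr($huc x)
  simpa [hu_ker] using hcx

/-- Let `M` be a von Neumann algebra on `H`, let `u ∈ M` be positive with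
trivial kernel, and let `c ∈ M` be self-adjoint. If the spectrum of `c²u` (in `B(H)`) contains
no strictly positive real number, then `c = 0`. -/
theorem eq_zero_of_spectrum_sq_mul_nonpos (M : VonNeumannAlgebra H)
    (u c : H →L[ℂ] H) (huM : u ∈ M) (hcM : c ∈ M)
    (hu_pos : u.IsPositive) (hu_ker : LinearMap.ker (u : H →ₗ[ℂ] H) = ⊥)
    (hc : IsSelfAdjoint c)
    (hspec : ∀ r : ℝ, 0 < r → (r : ℂ) ∉ spectrum ℂ (c ^ 2 * u)) :
    c = 0 :=
  eq_zero_of_spectrum_sq_mul_nonpos_general u c hu_pos hu_ker hc hspec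
end
end

section
/- Let M be a von Neumann algebra acting on a complex Hilbert space H, let u ∈ M be a positive element with trivial kernel, and let c ∈ M be self-adjoint. If uc + cu = 0, then c = 0. -/
noncomputable section

/-! If `u ≥ 0` is injective and `uc + cu = 0`, then `u²c = -ucu = cu²`, so `c` commutes with `u²`
and hence with its square root `u`. Then `uc = cu = -uc`, so `uc = 0`, and `c = 0` because `u` is
injective. -/

section Anticommute

variable {A : Type*} [Ring A] {a b : A}

theorem commute_mul_self_of_mul_add_mul_eq_zero (h : a * b + b * a = 0) :
    Commute (a * a) b := by
  show a * a * b = b * (a * a)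
  have hab : a * b = -(b * a) := eq_neg_of_add_eq_zero_left h
  calc a * a * b = a * (a * b) := mul_assoc a a b
    _ = -(a * (b * a)) := by rw [hab, mul_neg]
    _ = b * (a * a) := by rw [← mul_assoc, hab, neg_mul, neg_neg, mul_assoc]

theorem mul_eq_zero_of_mul_add_mul_eq_zero_of_commute (R : Type*) [DivisionRing R] [CharZero R]
    [Module R A] (h : a * b + b * a = 0) (hab : Commute a b) : a * b = 0 := by
  rw [← hab.eq, ← two_smul R] at h
  exact (smul_eq_zero.mp h).resolve_left two_ne_zero

end Anticommute

theorem Commute.of_mul_self_left_of_nonneg {A : Type*} [CStarAlgebra A] [PartialOrder A]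
    [StarOrderedRing A] {a b : A} (ha : 0 ≤ a) (h : Commute (a * a) b) : Commute a b := by
  rw [← CFC.sqrt_mul_self a ha, CFC.sqrt_eq_cfc]
  exact h.cfc_nnreal _

variable {H : Type*} [NormedAddCommGroup H] [InnerProductSpace ℂ H] [CompleteSpace H]

theorem eq_zero_of_anticommutes_with_positive_general
    (u c : H →L[ℂ] H)
    (hu_pos : u.IsPositive) (hu_ker : LinearMap.ker (u : H →ₗ[ℂ] H) = ⊥)
    (h : u * c + c * u = 0) :
    c = 0 := by
  have hu : 0 ≤ u := (ContinuousLinearMap.nonneg_iff_isPositive u).mpr hu_pos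
  have hcomm : Commute u c :=
    (commute_mul_self_of_mul_add_mul_eq_zero h).of_mul_self_left_of_nonneg hu
  have huc : u * c = 0 := mul_eq_zero_of_mul_add_mul_eq_zero_of_commute ℂ h hcomm
  ext x
  exact LinearMap.ker_eq_bot.mp hu_ker (by simpa using congr($huc x))

/-- Let `M` be a von Neumann algebra on `H`, let `u ∈ M` be positive with
trivial kernel, and let `c ∈ M` be self-adjoint. If `uc + cu = 0`, then `c = 0`. -/
theorem eq_zero_of_anticommutes_with_positive (M : VonNeumannAlgebra H)
    (u c : H →L[ℂ] H) (huM : u ∈ M) (hcM : c ∈ M)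
    (hu_pos : u.IsPositive) (hu_ker : LinearMap.ker (u : H →ₗ[ℂ] H) = ⊥)
    (hc : IsSelfAdjoint c)
    (h : u * c + c * u = 0) :
    c = 0 :=
  eq_zero_of_anticommutes_with_positive_general u c hu_pos hu_ker h
end
end

section
/- Let M be a von Neumann algebra, let T : M → M be a (not necessarily linear or continuous) 2-local triple derivation, and let p be a central projection in M (a projection commuting with every element of M). Then T maps Mp into Mp; moreover, T(px) = pT(x) for every x ∈ M. -/
/-! Only the triple derivation that matches `T` at `px` and `x` is needed. For a central projection
`p` one has `{p,p,y} = {y,p,p} = py` and `{p,y,p} = py*`. Evaluating a triple derivation `δ` on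
`{p,p,p} = p` gives `δp = pδp` and `pδ(p)* = -δp`; then the terms `{δp,p,x}` and `{p,δp,x}` of
`δ{p,p,x}` cancel, leaving `δ(px) = pδ(x)`. -/

noncomputable section

section CentralProjection

variable {A : Type*} [NonUnitalRing A] [StarRing A] [Module ℂ A]

lemma triple_eq_of_mul_star_mul_eq {a b c z : A} (h₁ : a * star b * c = z)
    (h₂ : c * star b * a = z) : triple a b c = z := by
  rw [triple, h₁, h₂, ← two_smul ℂ z, inv_smul_smul₀ two_ne_zero]

variable {p : A} (hp_sa : IsSelfAdjoint p) (hp_idem : IsIdempotentElem p)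
  (hp_central : ∀ x : A, p * x = x * p)
include hp_sa hp_idem hp_central

lemma triple_self_self_left (y : A) : triple p p y = p * y :=
  triple_eq_of_mul_star_mul_eq (by rw [hp_sa.star_eq, hp_idem.eq])
    (by rw [hp_sa.star_eq, mul_assoc, hp_idem.eq, hp_central])

lemma triple_self_self_right (y : A) : triple y p p = p * y :=
  triple_eq_of_mul_star_mul_eq (by rw [hp_sa.star_eq, mul_assoc, hp_idem.eq, hp_central])
    (by rw [hp_sa.star_eq, hp_idem.eq])

omit hp_sa in
lemma triple_self_mid_self (y : A) : triple p y p = p * star y :=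
  triple_eq_of_mul_star_mul_eq (by rw [← hp_central, ← mul_assoc, hp_idem.eq])
    (by rw [← hp_central, ← mul_assoc, hp_idem.eq])

namespace IsTripleDerivation

variable {S : A →ₗ[ℂ] A} (hS : IsTripleDerivation S)
include hS

lemma map_projection : S p = p * S p + p * star (S p) + p * S p := by
  have h := hS p p p
  rwa [triple_self_self_left hp_sa hp_idem hp_central, hp_idem.eq,
    triple_self_self_right hp_sa hp_idem hp_central,
    triple_self_mid_self hp_idem hp_central,
    triple_self_self_left hp_sa hp_idem hp_central] at h

lemma mul_map_projection : p * S p = S p := by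
  have h := congrArg (p * ·) (hS.map_projection hp_sa hp_idem hp_central)
  simp only [mul_add, ← mul_assoc, hp_idem.eq] at h
  rw [h, ← hS.map_projection hp_sa hp_idem hp_central]

lemma mul_star_map_projection : p * star (S p) = -S p := by
  have h := hS.map_projection hp_sa hp_idem hp_central
  rw [hS.mul_map_projection hp_sa hp_idem hp_central] at h
  rw [eq_neg_iff_add_eq_zero, add_comm]
  simpa using h.symm

lemma map_projection_mul (x : A) : S (p * x) = p * S x := by
  have h := hS p p x
  have hSp := hS.mul_map_projection hp_sa hp_idem hp_central
  have hSp_star := hS.mul_star_map_projection hp_sa hp_idem hp_central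
  have hcancel : triple (S p) p x + triple p (S p) x = 0 := by
    rw [triple, triple, ← smul_add, hp_sa.star_eq, ← hp_central (S p), hSp, mul_assoc x p,
      hSp, hSp_star, mul_assoc x, ← hp_central (star (S p)), hSp_star]
    simp only [neg_mul, mul_neg]
    rw [add_add_add_comm, add_neg_cancel, add_neg_cancel, add_zero, smul_zero]
  rwa [triple_self_self_left hp_sa hp_idem hp_central, hcancel, zero_add,
    triple_self_self_left hp_sa hp_idem hp_central] at h

end IsTripleDerivation

lemma Is2LocalTripleDerivation.map_projection_mul {T : A → A}
    (hT : Is2LocalTripleDerivation T) (x : A) : T (p * x) = p * T x := by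
  obtain ⟨S, hS, hpx, hx⟩ := hT (p * x) x
  rw [hpx, hx, hS.map_projection_mul hp_sa hp_idem hp_central]

end CentralProjection

variable {H : Type*} [NormedAddCommGroup H] [InnerProductSpace ℂ H] [CompleteSpace H]

/-- If `T` is a 2-local triple derivation on a von Neumann algebra `M` and
`p` is a central projection in `M`, then `T` maps `Mp` into `Mp`, and `T(px) = pT(x)` for
every `x ∈ M`. -/
theorem twoLocalTripleDerivation_central_projection (M : VonNeumannAlgebra H)
    (T : M → M) (hT : Is2LocalTripleDerivation T)
    (p : M) (hp_sa : IsSelfAdjoint p) (hp_idem : IsIdempotentElem p)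
    (hp_central : ∀ x : M, p * x = x * p) :
    (∀ x : M, ∃ y : M, T (x * p) = y * p) ∧ ∀ x : M, T (p * x) = p * T x := by
  have hTp := hT.map_projection_mul hp_sa hp_idem hp_central
  refine ⟨fun x => ⟨T x, ?_⟩, hTp⟩
  rw [← hp_central x, ← hp_central (T x), hTp]
end
end

section
/- Let M be a von Neumann algebra and let T : M → M be a (not necessarily linear or continuous) 2-local triple derivation. If T(x) = 0 for every self-adjoint element x ∈ M, then T = 0 on all of M. -/
/-! Evaluating a triple derivation `δ` at `{1, y, 1} = y*` gives
`δ(y*) = δ(y)* + δ(1) y* + y* δ(1)`, so `δ` is a `*`-map as soon as `δ(1) = 0`.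
Two-locality only matches `T` at two points, but for self-adjoint `c` the second point can be
taken to be `c + (‖c‖ + 1)`: a derivation killing it makes `δ(1)` anticommute with
`c + (‖c‖ + 1)`, which forces `δ(1) = 0` by a norm estimate, and then also `δ(c) = 0`.
With `x = ℜ x + i ℑ x`, taking `c = ℜ x` exhibits `T x = i δ(ℑ x)` as skew-adjoint and taking
`c = ℑ x` exhibits `T x = δ'(ℜ x)` as self-adjoint, so `T x = 0`. -/

noncomputable section

variable {H : Type*} [NormedAddCommGroup H] [InnerProductSpace ℂ H] [CompleteSpace H]

lemma triple_one_one_s18 {A : Type*} [Ring A] [StarRing A] [Module ℂ A] (y : A) :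
    triple (1 : A) y 1 = star y := by
  simp only [triple, one_mul, mul_one, ← two_smul ℂ (star y), smul_smul]
  norm_num

lemma eq_zero_of_mul_add_mul_eq_zero_of_norm_lt {𝕜 A : Type*} [RCLike 𝕜] [NormedRing A]
    [NormedAlgebra 𝕜 A] {a s : A} {r : 𝕜} (hr : ‖a‖ < ‖r‖)
    (h : s * (a + algebraMap 𝕜 A r) + (a + algebraMap 𝕜 A r) * s = 0) : s = 0 := by
  have hs : (2 * r) • s = -(s * a + a * s) := by
    rw [eq_neg_iff_add_eq_zero, ← h]
    simp only [Algebra.algebraMap_eq_smul_one, mul_add, add_mul, mul_smul_comm, smul_mul_assoc,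
      mul_one, one_mul]
    module
  have hle : 2 * ‖r‖ * ‖s‖ ≤ 2 * ‖a‖ * ‖s‖ :=
    calc 2 * ‖r‖ * ‖s‖ = ‖(2 * r) • s‖ := by simp [norm_smul]
      _ = ‖s * a + a * s‖ := by rw [hs, norm_neg]
      _ ≤ ‖s‖ * ‖a‖ + ‖a‖ * ‖s‖ :=
        (norm_add_le _ _).trans (add_le_add (norm_mul_le _ _) (norm_mul_le _ _))
      _ = 2 * ‖a‖ * ‖s‖ := by ring
  exact norm_le_zero_iff.mp (by nlinarith [norm_nonneg s])

namespace IsTripleDerivation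

variable {A : Type*} [Ring A] [StarRing A] [Algebra ℂ A] {δ : A →ₗ[ℂ] A}

lemma map_star_s18 (hδ : IsTripleDerivation δ) (y : A) :
    δ (star y) = star (δ y) + (δ 1 * star y + star y * δ 1) := by
  have h := hδ 1 y 1
  rw [triple_one_one_s18] at h
  rw [h]
  simp only [triple, one_mul, mul_one]
  module

lemma map_star_of_map_one (hδ : IsTripleDerivation δ) (h1 : δ 1 = 0) (y : A) :
    δ (star y) = star (δ y) := by
  simp [hδ.map_star_s18, h1]

lemma isSelfAdjoint_map (hδ : IsTripleDerivation δ) (h1 : δ 1 = 0) {y : A}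
    (hy : IsSelfAdjoint y) : IsSelfAdjoint (δ y) := by
  rw [IsSelfAdjoint, ← hδ.map_star_of_map_one h1, hy.star_eq]

end IsTripleDerivation

namespace Is2LocalTripleDerivation

variable {A : Type*} [NormedRing A] [StarRing A] [NormedAlgebra ℂ A] [StarModule ℂ A]
  {T : A → A}

open scoped ComplexStarModule

lemma exists_eq_map_one_eq_zero_map_eq_zero (hT : Is2LocalTripleDerivation T)
    (hsa : ∀ x : A, IsSelfAdjoint x → T x = 0) (x : A) {c : A} (hc : IsSelfAdjoint c) :
    ∃ S : A →ₗ[ℂ] A, IsTripleDerivation S ∧ T x = S x ∧ S 1 = 0 ∧ S c = 0 := by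
  set r : ℂ := ((‖c‖ + 1 : ℝ) : ℂ)
  have hr : ‖c‖ < ‖r‖ := by
    rw [Complex.norm_real, Real.norm_of_nonneg (by positivity)]
    exact lt_add_one _
  have hshift : IsSelfAdjoint (c + algebraMap ℂ A r) :=
    hc.add (IsSelfAdjoint.algebraMap A (Complex.conj_ofReal _))
  obtain ⟨S, hS, hSx, hTshift⟩ := hT x (c + algebraMap ℂ A r)
  have hSshift : S (c + algebraMap ℂ A r) = 0 := hTshift ▸ hsa _ hshift
  have hS1 : S 1 = 0 := by
    refine eq_zero_of_mul_add_mul_eq_zero_of_norm_lt hr ?_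
    have := hS.map_star_s18 (c + algebraMap ℂ A r)
    rwa [hshift.star_eq, hSshift, star_zero, zero_add, eq_comm] at this
  refine ⟨S, hS, hSx, hS1, ?_⟩
  rwa [map_add, Algebra.algebraMap_eq_smul_one, map_smul, hS1, smul_zero, add_zero] at hSshift

theorem eq_zero_of_map_selfAdjoint (hT : Is2LocalTripleDerivation T)
    (hsa : ∀ x : A, IsSelfAdjoint x → T x = 0) (x : A) : T x = 0 := by
  have hx := realPart_add_I_smul_imaginaryPart x
  obtain ⟨S, hS, hSx, hS1, hSre⟩ :=
    hT.exists_eq_map_one_eq_zero_map_eq_zero hsa x (ℜ x).2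
  obtain ⟨S', hS', hS'x, hS'1, hS'im⟩ :=
    hT.exists_eq_map_one_eq_zero_map_eq_zero hsa x (ℑ x).2
  have hskew : star (T x) = -T x := by
    have : T x = Complex.I • S (ℑ x) := by
      rw [hSx, ← congrArg S hx, map_add, map_smul, hSre, zero_add]
    rw [this, star_smul, (hS.isSelfAdjoint_map hS1 (ℑ x).2).star_eq, Complex.star_def,
      Complex.conj_I, neg_smul]
  have hself : star (T x) = T x := by
    have : T x = S' (ℜ x) := by
      rw [hS'x, ← congrArg S' hx, map_add, map_smul, hS'im, smul_zero, add_zero]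
    rw [this, (hS'.isSelfAdjoint_map hS'1 (ℜ x).2).star_eq]
  have h2 : (2 : ℂ) • T x = 0 := by
    rw [two_smul]
    nth_rewrite 1 [← hself]
    rw [hskew, neg_add_cancel]
  exact (smul_eq_zero.mp h2).resolve_left two_ne_zero

end Is2LocalTripleDerivation

/-- If a 2-local triple derivation on a von Neumann algebra vanishes on all
self-adjoint elements, then it vanishes identically. -/
theorem twoLocalTripleDerivation_eq_zero_of_vanishes_on_selfAdjoint (M : VonNeumannAlgebra H)
    (T : M → M) (hT : Is2LocalTripleDerivation T)
    (hsa : ∀ x : M, IsSelfAdjoint x → T x = 0) :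
    ∀ x : M, T x = 0 :=
  hT.eq_zero_of_map_selfAdjoint hsa
end
end
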